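/- arXiv:1009.5938 — 3 statements merged into one kernel-verified Lean document; each statement's English description precedes it below -/
import Mathlib

section
/- Imaginary-part identity: under the hypotheses of the energy identity for the generalized Rayleigh equation, with σ = σ_r + iσ_i and σ_i ≠ 0, one has ∫_a^b G''(y) |v(y)|² / |G(y) - σ|² dy = 0. -/
open Set MeasureTheory intervalIntegral Complex ComplexConjugate

/-!
Multiplying the equation by `conj v` and integrating by parts against the Dirichlet boundary
conditions gives the energy identity `∫ (conj v * v'' + |v'|²) = 0`. Its imaginary part kills
`|v'|²` and the real term `α²|v|²`, and `Im (G'' / (G - σ)) = σᵢ G'' / |G - σ|²`, so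
`σᵢ ∫ G'' |v|² / |G - σ|² = 0`.
-/

theorem ContDiffOn.intervalIntegrable_deriv {E : Type*} [NormedAddCommGroup E] [NormedSpace ℝ E]
    {f : ℝ → E} {a b : ℝ} (hf : ContDiffOn ℝ 1 f (Icc a b)) (hab : a ≤ b) :
    IntervalIntegrable (deriv f) volume a b := by
  rcases hab.eq_or_lt with rfl | hab
  · exact IntervalIntegrable.refl
  have hcont := (hf.derivWithin (m := 0) (uniqueDiffOn_Icc hab) (by simp)).continuousOn
  refine (hcont.intervalIntegrable_of_Icc hab.le).congr_uIoo fun x hx => ?_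
  rw [uIoo_of_le hab.le] at hx
  exact derivWithin_of_mem_nhds (Icc_mem_nhds hx.1 hx.2)

section Energy

variable {𝕜 : Type*} [RCLike 𝕜] {v : ℝ → 𝕜} {a b : ℝ}

/- `deriv v` is junk at the endpoints, so the boundary term is built from `derivWithin v (Icc a b)`,
which is `C¹` on the closed interval. -/
theorem hasDerivAt_conj_mul_derivWithin_Icc (hv : ContDiffOn ℝ 2 v (Icc a b)) {x : ℝ}
    (hx : x ∈ Ioo a b) :
    HasDerivAt (fun y => conj (v y) * derivWithin v (Icc a b) y)
      (conj (v x) * deriv (deriv v) x + (‖deriv v x‖ ^ 2 : ℝ)) x := by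
  have hIcc : Icc a b ∈ nhds x := Icc_mem_nhds hx.1 hx.2
  have hderiv : derivWithin v (Icc a b) =ᶠ[nhds x] deriv v := by
    filter_upwards [isOpen_Ioo.mem_nhds hx] with y hy
    exact derivWithin_of_mem_nhds (Icc_mem_nhds hy.1 hy.2)
  have hv' : HasDerivAt v (deriv v x) x :=
    ((hv.contDiffAt hIcc).differentiableAt (by norm_num)).hasDerivAt
  have hw : ContDiffOn ℝ 1 (derivWithin v (Icc a b)) (Icc a b) :=
    hv.derivWithin (uniqueDiffOn_Icc (hx.1.trans hx.2)) (by norm_num)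
  have hw' := ((hw.contDiffAt hIcc).differentiableAt (by norm_num)).hasDerivAt
  rw [hderiv.deriv_eq] at hw'
  have hprod := hv'.star.fun_mul hw'
  simp only [RCLike.star_def] at hprod
  convert hprod using 1
  rw [hderiv.eq_of_nhds, RCLike.ofReal_pow, ← RCLike.mul_conj]
  ring

theorem contDiffOn_conj_mul_derivWithin_Icc (hv : ContDiffOn ℝ 2 v (Icc a b)) (hab : a < b) :
    ContDiffOn ℝ 1 (fun y => conj (v y) * derivWithin v (Icc a b) y) (Icc a b) :=
  ((RCLike.conjCLE (K := 𝕜)).contDiff.comp_contDiffOn (hv.of_le one_le_two)).mul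
    (hv.derivWithin (uniqueDiffOn_Icc hab) le_rfl)

theorem intervalIntegrable_conj_mul_deriv_deriv_add_norm_sq (hv : ContDiffOn ℝ 2 v (Icc a b))
    (hab : a ≤ b) :
    IntervalIntegrable (fun x => conj (v x) * deriv (deriv v) x + (‖deriv v x‖ ^ 2 : ℝ))
      volume a b := by
  rcases hab.eq_or_lt with rfl | hab
  · exact IntervalIntegrable.refl
  refine ((contDiffOn_conj_mul_derivWithin_Icc hv hab).intervalIntegrable_deriv hab.le).congr_uIoo
    fun x hx => ?_
  rw [uIoo_of_le hab.le] at hx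
  exact (hasDerivAt_conj_mul_derivWithin_Icc hv hx).deriv

theorem integral_conj_mul_deriv_deriv_add_norm_sq (hv : ContDiffOn ℝ 2 v (Icc a b)) (hab : a ≤ b)
    (ha : v a = 0) (hb : v b = 0) :
    ∫ x in a..b, (conj (v x) * deriv (deriv v) x + (‖deriv v x‖ ^ 2 : ℝ)) = 0 := by
  rcases hab.eq_or_lt with rfl | hab
  · exact integral_same
  rw [← integral_congr_Ioo_of_le hab.le
      fun x hx => (hasDerivAt_conj_mul_derivWithin_Icc hv hx).deriv,
    integral_deriv_of_contDiffOn_Icc (contDiffOn_conj_mul_derivWithin_Icc hv hab) hab.le, ha, hb]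
  simp

theorem integral_im_conj_mul_deriv_deriv (hv : ContDiffOn ℝ 2 v (Icc a b)) (hab : a ≤ b)
    (ha : v a = 0) (hb : v b = 0) :
    ∫ x in a..b, RCLike.im (conj (v x) * deriv (deriv v) x) = 0 := by
  calc ∫ x in a..b, RCLike.im (conj (v x) * deriv (deriv v) x)
      = ∫ x in a..b, RCLike.im (conj (v x) * deriv (deriv v) x + (‖deriv v x‖ ^ 2 : ℝ)) := by
        simp only [map_add, RCLike.ofReal_im, add_zero]
    _ = RCLike.im (∫ x in a..b, (conj (v x) * deriv (deriv v) x + (‖deriv v x‖ ^ 2 : ℝ))) :=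
        RCLike.imCLM.intervalIntegral_comp_comm
          (intervalIntegrable_conj_mul_deriv_deriv_add_norm_sq hv hab)
    _ = 0 := by rw [integral_conj_mul_deriv_deriv_add_norm_sq hv hab ha hb, map_zero]

end Energy

theorem Complex.im_ofReal_div_ofReal_sub (r x : ℝ) (σ : ℂ) :
    ((r : ℂ) / ((x : ℂ) - σ)).im = σ.im * r / ‖(x : ℂ) - σ‖ ^ 2 := by
  rw [div_im, ← normSq_eq_norm_sq]
  simp only [ofReal_im, ofReal_re, sub_im, sub_re]
  ring

theorem imaginary_part_identity_general (a b : ℝ) (hab : a < b)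
    (G : ℝ → ℝ) (α : ℝ) (σ : ℂ)
    (hσ : σ.im ≠ 0)
    (v : ℝ → ℂ) (hv : ContDiffOn ℝ 2 v (Icc a b))
    (hva : v a = 0) (hvb : v b = 0)
    (heq : ∀ y ∈ Icc a b,
      deriv (deriv v) y =
        (((deriv (deriv G) y : ℝ) : ℂ) / (((G y : ℝ) : ℂ) - σ) + ((α ^ 2 : ℝ) : ℂ)) * v y) :
    ∫ y in a..b, deriv (deriv G) y * ‖v y‖ ^ 2 / ‖((G y : ℝ) : ℂ) - σ‖ ^ 2 = 0 := by
  have him_eq : ∀ y ∈ uIcc a b, RCLike.im (conj (v y) * deriv (deriv v) y) =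
      σ.im * (deriv (deriv G) y * ‖v y‖ ^ 2 / ‖((G y : ℝ) : ℂ) - σ‖ ^ 2) := by
    intro y hy
    rw [uIcc_of_le hab.le] at hy
    rw [RCLike.im_to_complex, heq y hy, mul_left_comm, Complex.conj_mul', ← ofReal_pow,
      im_mul_ofReal, add_im, ofReal_im, add_zero, im_ofReal_div_ofReal_sub]
    ring
  have h := integral_im_conj_mul_deriv_deriv hv hab.le hva hvb
  rw [integral_congr him_eq, intervalIntegral.integral_const_mul] at h
  exact (mul_eq_zero.mp h).resolve_left hσ

theorem imaginary_part_identity (a b : ℝ) (hab : a < b)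
    (G : ℝ → ℝ) (hG : ContDiffOn ℝ 2 G (Icc a b)) (α : ℝ) (σ : ℂ)
    (hσ : σ.im ≠ 0)
    (v : ℝ → ℂ) (hv : ContDiffOn ℝ 2 v (Icc a b))
    (hvne : ∃ y ∈ Icc a b, v y ≠ 0)
    (hva : v a = 0) (hvb : v b = 0)
    (heq : ∀ y ∈ Icc a b,
      deriv (deriv v) y =
        (((deriv (deriv G) y : ℝ) : ℂ) / (((G y : ℝ) : ℂ) - σ) + ((α ^ 2 : ℝ) : ℂ)) * v y) :
    ∫ y in a..b, deriv (deriv G) y * ‖v y‖ ^ 2 / ‖((G y : ℝ) : ℂ) - σ‖ ^ 2 = 0 :=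
  imaginary_part_identity_general a b hab G α σ hσ v hv hva hvb heq
end

section
/- Generalized Fjørtoft theorem: suppose v is a nonzero C² complex solution on [a,b] of v'' - (G''/(G - σ)) v = α² v with v(a) = v(b) = 0, where G = k₁U + k₃W is real C², σ = σ_r + iσ_i with σ_i ≠ 0, and (α, and hence ∫(|v'|²+α²|v|²)) is positive. Let y* ∈ (a,b) be a point with G''(y*) = 0 provided by the generalized Rayleigh theorem. Then there exists y₀ ∈ (a,b) such that G''(y₀)·(G(y₀) - G(y*)) < 0. -/
open Set MeasureTheory intervalIntegral Complex

open scoped Topology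

/-!
Multiplying the equation `v'' = (G''/(G - σ) + α²) v` by `conj v` and integrating by parts (the
boundary terms vanish) gives `∫ |v'|² + (G''/(G - σ) + α²) |v|² = 0`. With
`w = G'' |v|² / |G - σ|²`, the imaginary part of this identity is `σᵢ ∫ w = 0` and its real part is
`∫ (G - σᵣ) w = -∫ (|v'|² + α² |v|²) < 0`. Since `∫ w = 0`, the constant `σᵣ` may be replaced by any
constant `G(y')`, so `G'' (G - G(y')) |v|² / |G - σ|²` is negative somewhere in `(a, b)`.
-/

section IccDeriv

variable {E : Type*} [NormedAddCommGroup E] [NormedSpace ℝ E] {a b x : ℝ} {f : ℝ → E}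

theorem derivWithin_Icc_of_mem_Ioo (hx : x ∈ Ioo a b) :
    derivWithin f (Icc a b) x = deriv f x :=
  derivWithin_of_mem_nhds (Icc_mem_nhds hx.1 hx.2)

theorem derivWithin_derivWithin_Icc_of_mem_Ioo (hx : x ∈ Ioo a b) :
    derivWithin (derivWithin f (Icc a b)) (Icc a b) x = deriv (deriv f) x := by
  have h : derivWithin f (Icc a b) =ᶠ[𝓝 x] deriv f := by
    filter_upwards [Ioo_mem_nhds hx.1 hx.2] with y hy using derivWithin_Icc_of_mem_Ioo hy
  rw [derivWithin_Icc_of_mem_Ioo hx, h.deriv_eq]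

theorem ContDiffOn.hasDerivAt_derivWithin_Icc {n : WithTop ℕ∞} (hf : ContDiffOn ℝ n f (Icc a b))
    (hn : n ≠ 0) (hx : x ∈ Ioo a b) : HasDerivAt f (derivWithin f (Icc a b) x) x := by
  rw [derivWithin_Icc_of_mem_Ioo hx]
  exact ((hf.differentiableOn hn).differentiableAt (Icc_mem_nhds hx.1 hx.2)).hasDerivAt

theorem ContDiffOn.hasDerivAt_derivWithin_Icc_deriv_deriv (hf : ContDiffOn ℝ 2 f (Icc a b))
    (hab : a < b) (hx : x ∈ Ioo a b) :
    HasDerivAt (derivWithin f (Icc a b)) (deriv (deriv f) x) x := by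
  rw [← derivWithin_derivWithin_Icc_of_mem_Ioo hx]
  exact (hf.derivWithin (m := 1) (uniqueDiffOn_Icc hab) le_rfl).hasDerivAt_derivWithin_Icc
    one_ne_zero hx

end IccDeriv

theorem exists_mem_Ioo_neg_of_intervalIntegral_neg {f : ℝ → ℝ} {a b : ℝ} (hab : a ≤ b)
    (h : ∫ x in a..b, f x < 0) : ∃ x ∈ Ioo a b, f x < 0 := by
  by_contra! hf
  refine h.not_ge (integral_nonneg_of_ae_restrict hab ?_)
  rw [← Measure.restrict_congr_set Ioo_ae_eq_Icc]
  exact (ae_restrict_iff' measurableSet_Ioo).mpr (ae_of_all _ hf)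

theorem integral_normSq_deriv_add_mul_normSq_eq_zero {a b : ℝ} (hab : a ≤ b) {v v' Q : ℝ → ℂ}
    (hv : ContinuousOn v (Icc a b)) (hv' : ContinuousOn v' (Icc a b))
    (hQ : ContinuousOn Q (Icc a b)) (hderiv : ∀ x ∈ Ioo a b, HasDerivAt v (v' x) x)
    (hderiv' : ∀ x ∈ Ioo a b, HasDerivAt v' (Q x * v x) x) (ha : v a = 0) (hb : v b = 0) :
    ∫ x in a..b, ((normSq (v' x) : ℂ) + Q x * normSq (v x)) = 0 := by
  have hF : ∀ x ∈ Ioo a b, HasDerivAt (fun y ↦ star (v y) * v' y)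
      ((normSq (v' x) : ℂ) + Q x * normSq (v x)) x := by
    intro x hx
    refine ((hderiv x hx).star.fun_mul (hderiv' x hx)).congr_deriv ?_
    simp only [normSq_eq_conj_mul_self, star_def]
    ring
  have hcont : ContinuousOn (fun x ↦ (normSq (v' x) : ℂ) + Q x * normSq (v x)) (Icc a b) := by
    fun_prop
  rw [integral_eq_sub_of_hasDerivAt_of_le hab (by fun_prop) hF
    (hcont.intervalIntegrable_of_Icc hab)]
  simp [ha, hb]

theorem ofReal_sub_ne_zero_of_im_ne_zero {σ : ℂ} (hσ : σ.im ≠ 0) (y : ℝ) : (y : ℂ) - σ ≠ 0 :=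
  fun h ↦ hσ (by simpa using congrArg im h)

/-- `g` stands for `G''`; it is taken as a separate function so that it can be the second
derivative within `[a, b]`, which is continuous up to the endpoints. -/
noncomputable def rayleighWeight (σ : ℂ) (G g : ℝ → ℝ) (v : ℝ → ℂ) (x : ℝ) : ℝ :=
  g x * normSq (v x) / normSq ((G x : ℂ) - σ)

theorem mul_neg_of_mul_rayleighWeight_neg {σ : ℂ} {G g : ℝ → ℝ} {v : ℝ → ℂ} {c x : ℝ}
    (h : c * rayleighWeight σ G g v x < 0) : g x * c < 0 := by
  refine neg_of_mul_neg_left (h.trans_eq' ?_)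
    (div_nonneg (normSq_nonneg (v x)) (normSq_nonneg ((G x : ℂ) - σ)))
  rw [rayleighWeight]
  ring

theorem integral_sub_mul_rayleighWeight_eq_neg {a b α : ℝ} {σ : ℂ} {G g : ℝ → ℝ} {v v' : ℝ → ℂ}
    (hab : a ≤ b) (hσ : σ.im ≠ 0) (hG : ContinuousOn G (Icc a b)) (hg : ContinuousOn g (Icc a b))
    (hv : ContinuousOn v (Icc a b)) (hv' : ContinuousOn v' (Icc a b))
    (hderiv : ∀ x ∈ Ioo a b, HasDerivAt v (v' x) x)
    (hderiv' : ∀ x ∈ Ioo a b,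
      HasDerivAt v' (((g x : ℂ) / ((G x : ℂ) - σ) + ((α ^ 2 : ℝ) : ℂ)) * v x) x)
    (ha : v a = 0) (hb : v b = 0) (c : ℝ) :
    ∫ x in a..b, (G x - c) * rayleighWeight σ G g v x =
      -∫ x in a..b, (normSq (v' x) + α ^ 2 * normSq (v x)) := by
  set Q : ℝ → ℂ := fun x ↦ (g x : ℂ) / ((G x : ℂ) - σ) + ((α ^ 2 : ℝ) : ℂ) with hQ_def
  have hne := ofReal_sub_ne_zero_of_im_ne_zero hσ
  have hQ : ContinuousOn Q (Icc a b) :=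
    ((continuous_ofReal.comp_continuousOn hg).div (by fun_prop) fun x _ ↦ hne (G x)).add
      continuousOn_const
  have hw : ContinuousOn (rayleighWeight σ G g v) (Icc a b) :=
    (hg.mul (by fun_prop)).div (by fun_prop) fun x _ ↦ (normSq_pos.mpr (hne (G x))).ne'
  have hGw : ∀ s : ℝ, ContinuousOn (fun x ↦ (G x - s) * rayleighWeight σ G g v x) (Icc a b) :=
    fun s ↦ (hG.sub continuousOn_const).mul hw
  have hE : ContinuousOn (fun x ↦ normSq (v' x) + α ^ 2 * normSq (v x)) (Icc a b) := by fun_prop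
  have H := integral_normSq_deriv_add_mul_normSq_eq_zero hab hv hv' hQ hderiv hderiv' ha hb
  have hI : IntervalIntegrable (fun x ↦ (normSq (v' x) : ℂ) + Q x * normSq (v x)) volume a b :=
    ContinuousOn.intervalIntegrable_of_Icc hab (by fun_prop)
  have hre : ∀ x, ((normSq (v' x) : ℂ) + Q x * normSq (v x)).re =
      (normSq (v' x) + α ^ 2 * normSq (v x)) + (G x - σ.re) * rayleighWeight σ G g v x := by
    intro x
    simp [hQ_def, rayleighWeight, div_re, sq]
    ring
  have him : ∀ x, ((normSq (v' x) : ℂ) + Q x * normSq (v x)).im =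
      σ.im * rayleighWeight σ G g v x := by
    intro x
    simp [hQ_def, rayleighWeight, div_im, sq]
    ring
  have h_re := reCLM.intervalIntegral_comp_comm hI
  have h_im := imCLM.intervalIntegral_comp_comm hI
  simp only [reCLM_apply, imCLM_apply, H, zero_re, zero_im, hre, him] at h_re h_im
  rw [intervalIntegral.integral_add (hE.intervalIntegrable_of_Icc hab)
    ((hGw _).intervalIntegrable_of_Icc hab)] at h_re
  rw [intervalIntegral.integral_const_mul, mul_eq_zero, or_iff_right hσ] at h_im
  have h_split : ∫ x in a..b, (G x - c) * rayleighWeight σ G g v x =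
      (∫ x in a..b, (G x - σ.re) * rayleighWeight σ G g v x) +
        (σ.re - c) * ∫ x in a..b, rayleighWeight σ G g v x := by
    rw [← intervalIntegral.integral_const_mul, ← intervalIntegral.integral_add
      ((hGw _).intervalIntegrable_of_Icc hab)
      ((hw.intervalIntegrable_of_Icc hab).const_mul _)]
    exact integral_congr fun x _ ↦ by ring
  rw [h_split, h_im, mul_zero, add_zero]
  linarith

theorem generalized_fjortoft_general (a b : ℝ) (hab : a < b)
    (G : ℝ → ℝ) (hG : ContDiffOn ℝ 2 G (Icc a b)) (α : ℝ) (hα : α ≠ 0) (σ : ℂ)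
    (hσ : σ.im ≠ 0)
    (v : ℝ → ℂ) (hv : ContDiffOn ℝ 2 v (Icc a b))
    (hvne : ∃ y ∈ Icc a b, v y ≠ 0)
    (hva : v a = 0) (hvb : v b = 0)
    (heq : ∀ y ∈ Icc a b,
      deriv (deriv v) y =
        (((deriv (deriv G) y : ℝ) : ℂ) / (((G y : ℝ) : ℂ) - σ) + ((α ^ 2 : ℝ) : ℂ)) * v y)
    (y' : ℝ) :
    ∃ y₀ ∈ Ioo a b, deriv (deriv G) y₀ * (G y₀ - G y') < 0 := by
  have hs := uniqueDiffOn_Icc hab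
  have hv' := hv.continuousOn_derivWithin hs one_le_two
  have hidentity := integral_sub_mul_rayleighWeight_eq_neg (α := α) hab.le hσ hG.continuousOn
    ((hG.derivWithin (m := 1) hs le_rfl).continuousOn_derivWithin hs le_rfl) hv.continuousOn hv'
    (fun x hx ↦ hv.hasDerivAt_derivWithin_Icc two_ne_zero hx)
    (fun x hx ↦ by
      rw [derivWithin_derivWithin_Icc_of_mem_Ioo hx, ← heq x (Ioo_subset_Icc_self hx)]
      exact hv.hasDerivAt_derivWithin_Icc_deriv_deriv hab hx) hva hvb (G y')
  have henergy :
      0 < ∫ x in a..b, (normSq (derivWithin v (Icc a b) x) + α ^ 2 * normSq (v x)) := by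
    obtain ⟨y, hy, hvy⟩ := hvne
    have hvc := hv.continuousOn
    have hα2 : 0 < α ^ 2 := by positivity
    refine integral_pos hab (by fun_prop)
      (fun x _ ↦ add_nonneg (normSq_nonneg _) (mul_nonneg hα2.le (normSq_nonneg _)))
      ⟨y, hy, add_pos_of_nonneg_of_pos (normSq_nonneg _) (mul_pos hα2 (normSq_pos.mpr hvy))⟩
  obtain ⟨y₀, hy₀, hlt⟩ := exists_mem_Ioo_neg_of_intervalIntegral_neg hab.le
    (hidentity.trans_lt (neg_neg_of_pos henergy))
  refine ⟨y₀, hy₀, ?_⟩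
  rw [← derivWithin_derivWithin_Icc_of_mem_Ioo hy₀]
  exact mul_neg_of_mul_rayleighWeight_neg hlt

theorem generalized_fjortoft (a b : ℝ) (hab : a < b)
    (G : ℝ → ℝ) (hG : ContDiffOn ℝ 2 G (Icc a b)) (α : ℝ) (hα : α ≠ 0) (σ : ℂ)
    (hσ : σ.im ≠ 0)
    (v : ℝ → ℂ) (hv : ContDiffOn ℝ 2 v (Icc a b))
    (hvne : ∃ y ∈ Icc a b, v y ≠ 0)
    (hva : v a = 0) (hvb : v b = 0)
    (heq : ∀ y ∈ Icc a b,
      deriv (deriv v) y =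
        (((deriv (deriv G) y : ℝ) : ℂ) / (((G y : ℝ) : ℂ) - σ) + ((α ^ 2 : ℝ) : ℂ)) * v y)
    (y' : ℝ) (hy' : y' ∈ Ioo a b) (hG'' : deriv (deriv G) y' = 0) :
    ∃ y₀ ∈ Ioo a b, deriv (deriv G) y₀ * (G y₀ - G y') < 0 :=
  generalized_fjortoft_general a b hab G hG α hα σ hσ v hv hvne hva hvb heq y'
end

section
/- Let G be C² on [a,b] with G'' ≥ 0 on (a,b) and G''(y₀) > 0 at some y₀ ∈ (a,b) (or G'' ≤ 0 on (a,b) with strict inequality somewhere), and let α ≠ 0. Then there is no σ with Im σ ≠ 0 for which the generalized Rayleigh equation v'' - (G''/(G-σ)) v = α² v has a nonzero C² complex solution v on [a,b] with v(a) = v(b) = 0 (no unstable mode). -/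
open Set Complex MeasureTheory

lemma eq_zero_of_nonneg_of_integral_zero {f : ℝ → ℝ} {a b : ℝ} (hab : a < b)
    (hc : ContinuousOn f (Icc a b)) (hnn : ∀ y ∈ Ioo a b, 0 ≤ f y)
    (hint : ∫ y in a..b, f y = 0) : ∀ y ∈ Ioo a b, f y = 0 := by
  have hfi : IntervalIntegrable f volume a b := by
    apply ContinuousOn.intervalIntegrable
    rwa [uIcc_of_le hab.le]
  have hb : ∀ᵐ x : ℝ ∂volume, x ≠ b := by
    rw [MeasureTheory.ae_iff]
    simpa using Real.volume_singleton
  have h0 : 0 ≤ᵐ[volume.restrict (Ioc a b)] f := by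
    filter_upwards [ae_restrict_of_ae hb, ae_restrict_mem measurableSet_Ioc] with x hxb hxm
    exact hnn x ⟨hxm.1, lt_of_le_of_ne hxm.2 hxb⟩
  have hae : f =ᵐ[volume.restrict (Ioc a b)] 0 :=
    (intervalIntegral.integral_eq_zero_iff_of_le_of_nonneg_ae hab.le h0 hfi).mp hint
  intro y hy
  by_contra hne
  have hpos : 0 < f y := lt_of_le_of_ne (hnn y hy) (Ne.symm hne)
  have hca : ContinuousAt f y := (hc y (Ioo_subset_Icc_self hy)).continuousAt
    (Icc_mem_nhds hy.1 hy.2)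
  have hmem : f ⁻¹' (Ioi 0) ∩ Ioo a b ∈ nhds y :=
    Filter.inter_mem (hca.preimage_mem_nhds (Ioi_mem_nhds hpos))
      (isOpen_Ioo.mem_nhds hy)
  obtain ⟨c, d, hycd, hsub⟩ := mem_nhds_iff_exists_Ioo_subset.mp hmem
  have hnull : volume.restrict (Ioc a b) {x | ¬ f x = 0} = 0 := by
    have := hae
    rw [Filter.EventuallyEq, MeasureTheory.ae_iff] at this
    simpa using this
  rw [Measure.restrict_apply' measurableSet_Ioc] at hnull
  have hsub2 : Ioo c d ⊆ {x | ¬ f x = 0} ∩ Ioc a b := by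
    intro x hx
    rcases hsub hx with ⟨hx1, hx2⟩
    exact ⟨ne_of_gt hx1, Ioo_subset_Ioc_self hx2⟩
  have := measure_mono (μ := volume) hsub2
  rw [hnull, Real.volume_Ioo] at this
  have hcd : c < d := lt_trans hycd.1 hycd.2
  simp only [nonpos_iff_eq_zero, ENNReal.ofReal_eq_zero] at this
  linarith

theorem no_unstable_mode_for_single_signed_curvature (a b : ℝ) (hab : a < b)
    (G : ℝ → ℝ) (hG : ContDiffOn ℝ 2 G (Icc a b)) (α : ℝ) (hα : α ≠ 0) (σ : ℂ)
    (hσ : σ.im ≠ 0)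
    (hsign : ((∀ y ∈ Ioo a b, 0 ≤ deriv (deriv G) y) ∧ ∃ y₀ ∈ Ioo a b, 0 < deriv (deriv G) y₀) ∨
             ((∀ y ∈ Ioo a b, deriv (deriv G) y ≤ 0) ∧ ∃ y₀ ∈ Ioo a b, deriv (deriv G) y₀ < 0))
    (v : ℝ → ℂ) (hv : ContDiffOn ℝ 2 v (Icc a b))
    (hva : v a = 0) (hvb : v b = 0)
    (heq : ∀ y ∈ Icc a b,
      deriv (deriv v) y =
        (((deriv (deriv G) y : ℝ) : ℂ) / (((G y : ℝ) : ℂ) - σ) + ((α ^ 2 : ℝ) : ℂ)) * v y) :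
    ∀ y ∈ Icc a b, v y = 0 := by
  have hUD : UniqueDiffOn ℝ (Icc a b) := uniqueDiffOn_Icc hab
  set s : Set ℝ := Icc a b with hs
  set v1 : ℝ → ℂ := derivWithin v s with hv1def
  set G1 : ℝ → ℝ := derivWithin G s with hG1def
  set G2 : ℝ → ℝ := derivWithin G1 s with hG2def
  have hv1cd : ContDiffOn ℝ 1 v1 s := hv.derivWithin hUD (by norm_num)
  have hG1cd : ContDiffOn ℝ 1 G1 s := hG.derivWithin hUD (by norm_num)
  have hv1c : ContinuousOn v1 s := hv1cd.continuousOn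
  have hG2c : ContinuousOn G2 s := hG1cd.continuousOn_derivWithin hUD le_rfl
  have hGc : ContinuousOn G s := hG.continuousOn
  have hvc : ContinuousOn v s := hv.continuousOn
  -- nonvanishing denominator
  have hden : ∀ y : ℝ, ((G y : ℝ) : ℂ) - σ ≠ 0 := by
    intro y h
    apply hσ
    have := congrArg Complex.im h
    simpa using this.symm
  have hNpos : ∀ y : ℝ, 0 < Complex.normSq (((G y : ℝ) : ℂ) - σ) := fun y =>
    Complex.normSq_pos.mpr (hden y)
  set N : ℝ → ℝ := fun y => Complex.normSq (((G y : ℝ) : ℂ) - σ) with hNdef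
  -- derivatives at interior points
  have interior_facts : ∀ y ∈ Ioo a b,
      HasDerivAt v (v1 y) y ∧ HasDerivAt v1 (derivWithin v1 s y) y ∧
      derivWithin v1 s y = deriv (deriv v) y ∧ G2 y = deriv (deriv G) y := by
    intro y hy
    have hmem : s ∈ nhds y := Icc_mem_nhds hy.1 hy.2
    have hIoo : Ioo a b ∈ nhds y := isOpen_Ioo.mem_nhds hy
    have hd1 : HasDerivAt v (v1 y) y := by
      have h := (hv.differentiableOn (by norm_num)) y (Ioo_subset_Icc_self hy)
      have h2 := h.differentiableAt hmem
      have : v1 y = deriv v y := derivWithin_of_mem_nhds hmem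
      rw [this]; exact h2.hasDerivAt
    have hd2 : HasDerivAt v1 (derivWithin v1 s y) y := by
      have h := (hv1cd.differentiableOn (by norm_num)) y (Ioo_subset_Icc_self hy)
      have h2 := h.differentiableAt hmem
      have : derivWithin v1 s y = deriv v1 y := derivWithin_of_mem_nhds hmem
      rw [this]; exact h2.hasDerivAt
    have hev : v1 =ᶠ[nhds y] deriv v :=
      Filter.eventuallyEq_of_mem hIoo
        (fun x hx => derivWithin_of_mem_nhds (Icc_mem_nhds hx.1 hx.2))
    have hevG : G1 =ᶠ[nhds y] deriv G :=
      Filter.eventuallyEq_of_mem hIoo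
        (fun x hx => derivWithin_of_mem_nhds (Icc_mem_nhds hx.1 hx.2))
    refine ⟨hd1, hd2, ?_, ?_⟩
    · rw [derivWithin_of_mem_nhds hmem, hev.deriv_eq]
    · rw [hG2def, derivWithin_of_mem_nhds hmem, hevG.deriv_eq]
  -- the complex coefficient
  set Q : ℝ → ℂ := fun y => ((G2 y : ℝ) : ℂ) / (((G y : ℝ) : ℂ) - σ) + ((α ^ 2 : ℝ) : ℂ)
    with hQdef
  have hQc : ContinuousOn Q s := by
    apply ContinuousOn.add
    · exact (Complex.continuous_ofReal.comp_continuousOn hG2c).div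
        ((Complex.continuous_ofReal.comp_continuousOn hGc).sub continuousOn_const)
        (fun y _ => hden y)
    · exact continuousOn_const
  -- real component functions
  set A : ℝ → ℝ := fun y =>
    (G2 y * (G y - σ.re) / N y + α ^ 2) * Complex.normSq (v y) + Complex.normSq (v1 y)
    with hAdef
  set B : ℝ → ℝ := fun y => G2 y * σ.im / N y * Complex.normSq (v y) with hBdef
  set f' : ℝ → ℂ := fun y => Q y * (Complex.normSq (v y) : ℂ) + (Complex.normSq (v1 y) : ℂ)
    with hf'def
  -- pointwise decomposition
  have hQsplit : ∀ y : ℝ, Q y = ((G2 y * (G y - σ.re) / N y + α ^ 2 : ℝ) : ℂ)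
      + ((G2 y * σ.im / N y : ℝ) : ℂ) * I := by
    intro y
    have hN : N y ≠ 0 := (hNpos y).ne'
    rw [hQdef]
    simp only [hNdef] at hN ⊢
    apply Complex.ext
    · simp [Complex.div_re]
      field_simp
    · simp [Complex.div_im]
      field_simp
      ring
  have hf'AB : ∀ y : ℝ, f' y = (A y : ℂ) + (B y : ℂ) * I := by
    intro y
    simp only [hf'def, hAdef, hBdef]
    rw [hQsplit y]
    push_cast
    ring
  -- continuity / integrability
  have hAc : ContinuousOn A s := by
    apply ContinuousOn.add
    · apply ContinuousOn.mul
      · apply ContinuousOn.add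
        · apply ContinuousOn.div
          · exact hG2c.mul (hGc.sub continuousOn_const)
          · exact Complex.continuous_normSq.comp_continuousOn
              ((Complex.continuous_ofReal.comp_continuousOn hGc).sub continuousOn_const)
          · exact fun y _ => (hNpos y).ne'
        · exact continuousOn_const
      · exact Complex.continuous_normSq.comp_continuousOn hvc
    · exact Complex.continuous_normSq.comp_continuousOn hv1c
  have hBc : ContinuousOn B s := by
    apply ContinuousOn.mul
    · apply ContinuousOn.div
      · exact hG2c.mul continuousOn_const
      · exact Complex.continuous_normSq.comp_continuousOn
          ((Complex.continuous_ofReal.comp_continuousOn hGc).sub continuousOn_const)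
      · exact fun y _ => (hNpos y).ne'
    · exact Complex.continuous_normSq.comp_continuousOn hvc
  have hAi : IntervalIntegrable A volume a b := by
    apply ContinuousOn.intervalIntegrable; rwa [uIcc_of_le hab.le]
  have hBi : IntervalIntegrable B volume a b := by
    apply ContinuousOn.intervalIntegrable; rwa [uIcc_of_le hab.le]
  have hf'c : ContinuousOn f' s := by
    apply ContinuousOn.add
    · exact hQc.mul (Complex.continuous_ofReal.comp_continuousOn
        (Complex.continuous_normSq.comp_continuousOn hvc))
    · exact Complex.continuous_ofReal.comp_continuousOn
        (Complex.continuous_normSq.comp_continuousOn hv1c)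
  have hf'i : IntervalIntegrable f' volume a b := by
    apply ContinuousOn.intervalIntegrable; rwa [uIcc_of_le hab.le]
  -- the FTC identity
  set F : ℝ → ℂ := fun y => v1 y * star (v y) with hFdef
  have hFc : ContinuousOn F s := hv1c.mul (continuous_star.comp_continuousOn hvc)
  have hFderiv : ∀ y ∈ Ioo a b, HasDerivWithinAt F (f' y) (Ioi y) y := by
    intro y hy
    obtain ⟨hd1, hd2, he2, heG⟩ := interior_facts y hy
    have hstar : HasDerivAt (fun x => star (v x)) (star (v1 y)) y := hd1.star
    have := hd2.mul hstar
    have hkey : derivWithin v1 s y * star (v y) + v1 y * star (v1 y) = f' y := by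
      rw [he2, heq y (Ioo_subset_Icc_self hy)]
      rw [hf'def]
      have h1 : v y * star (v y) = (Complex.normSq (v y) : ℂ) := by
        rw [← Complex.mul_conj]; rfl
      have h2 : v1 y * star (v1 y) = (Complex.normSq (v1 y) : ℂ) := by
        rw [← Complex.mul_conj]; rfl
      rw [hQdef, ← heG]
      push_cast
      rw [← h1, ← h2]
      ring
    rw [hkey] at this
    exact this.hasDerivWithinAt
  have hint0 : ∫ y in a..b, f' y = 0 := by
    rw [intervalIntegral.integral_eq_sub_of_hasDeriv_right_of_le hab.le hFc hFderiv hf'i]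
    simp [hFdef, hva, hvb]
  -- separate real and imaginary parts
  have hsplit : ∫ y in a..b, f' y = ((∫ y in a..b, A y : ℝ) : ℂ) + ((∫ y in a..b, B y : ℝ) : ℂ) * I := by
    have : ∀ y : ℝ, f' y = (A y : ℂ) + (B y : ℂ) * I := hf'AB
    rw [intervalIntegral.integral_congr (g := fun y => (A y : ℂ) + (B y : ℂ) * I)
      (fun y _ => hf'AB y)]
    rw [intervalIntegral.integral_add]
    · rw [intervalIntegral.integral_mul_const, intervalIntegral.integral_ofReal,
        intervalIntegral.integral_ofReal]
    · apply ContinuousOn.intervalIntegrable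
      rw [uIcc_of_le hab.le]
      exact Complex.continuous_ofReal.comp_continuousOn hAc
    · apply ContinuousOn.intervalIntegrable
      rw [uIcc_of_le hab.le]
      exact (Complex.continuous_ofReal.comp_continuousOn hBc).mul continuousOn_const
  have hA0 : ∫ y in a..b, A y = 0 := by
    have := hint0
    rw [hsplit] at this
    have hre := congrArg Complex.re this
    simpa using hre
  have hB0 : ∫ y in a..b, B y = 0 := by
    have := hint0
    rw [hsplit] at this
    have him := congrArg Complex.im this
    simpa using him
  -- the Rayleigh function
  set h : ℝ → ℝ := fun y => G2 y * Complex.normSq (v y) / N y with hhdef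
  have hhc : ContinuousOn h s := by
    apply ContinuousOn.div
    · exact hG2c.mul (Complex.continuous_normSq.comp_continuousOn hvc)
    · exact Complex.continuous_normSq.comp_continuousOn
        ((Complex.continuous_ofReal.comp_continuousOn hGc).sub continuousOn_const)
    · exact fun y _ => (hNpos y).ne'
  have hBh : ∀ y : ℝ, B y = σ.im * h y := by
    intro y; simp only [hBdef, hhdef]; ring
  have hh0 : ∫ y in a..b, h y = 0 := by
    have : ∫ y in a..b, B y = σ.im * ∫ y in a..b, h y := by
      rw [intervalIntegral.integral_congr (g := fun y => σ.im * h y) (fun y _ => hBh y)]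
      exact intervalIntegral.integral_const_mul _ _
    rw [hB0] at this
    exact (mul_eq_zero.mp this.symm).resolve_left hσ
  -- numerator vanishes on the interior
  have hnum : ∀ y ∈ Ioo a b, G2 y * Complex.normSq (v y) = 0 := by
    have key : ∀ y ∈ Ioo a b, h y = 0 := by
      rcases hsign with ⟨hpos, -⟩ | ⟨hneg, -⟩
      · refine eq_zero_of_nonneg_of_integral_zero hab hhc ?_ hh0
        intro y hy
        have hG2y : 0 ≤ G2 y := by
          rw [(interior_facts y hy).2.2.2]; exact hpos y hy
        exact div_nonneg (mul_nonneg hG2y (Complex.normSq_nonneg _)) (hNpos y).le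
      · have := eq_zero_of_nonneg_of_integral_zero hab (hhc.neg) ?_ ?_
        · intro y hy
          have := this y hy
          simp only [Pi.neg_apply] at this
          linarith [this]
        · intro y hy
          have hG2y : G2 y ≤ 0 := by
            rw [(interior_facts y hy).2.2.2]; exact hneg y hy
          have : h y ≤ 0 :=
            div_nonpos_of_nonpos_of_nonneg
              (mul_nonpos_of_nonpos_of_nonneg hG2y (Complex.normSq_nonneg _)) (hNpos y).le
          rw [Pi.neg_apply]
          linarith
        · simp only [Pi.neg_apply]
          rw [intervalIntegral.integral_neg, hh0, neg_zero]
    intro y hy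
    have hk := key y hy
    simp only [hhdef] at hk
    exact (div_eq_zero_iff.mp hk).resolve_right (hNpos y).ne'
  -- real part reduces to a positive-definite quantity
  have hA_eq : ∀ y ∈ Ioo a b, A y = α ^ 2 * Complex.normSq (v y) + Complex.normSq (v1 y) := by
    intro y hy
    have h0 := hnum y hy
    simp only [hAdef]
    have he : G2 y * (G y - σ.re) / N y * Complex.normSq (v y)
        = (G y - σ.re) / N y * (G2 y * Complex.normSq (v y)) := by ring
    rw [add_mul, he, h0, mul_zero, zero_add]
  have hA_nn : ∀ y ∈ Ioo a b, 0 ≤ A y := by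
    intro y hy
    rw [hA_eq y hy]
    have := Complex.normSq_nonneg (v y)
    have := Complex.normSq_nonneg (v1 y)
    positivity
  have hAzero : ∀ y ∈ Ioo a b, A y = 0 :=
    eq_zero_of_nonneg_of_integral_zero hab hAc hA_nn hA0
  have hvzero : ∀ y ∈ Ioo a b, v y = 0 := by
    intro y hy
    have h1 := hAzero y hy
    rw [hA_eq y hy] at h1
    have hα2 : 0 < α ^ 2 := by positivity
    have h2 : Complex.normSq (v y) = 0 := by
      nlinarith [Complex.normSq_nonneg (v y), Complex.normSq_nonneg (v1 y)]
    exact Complex.normSq_eq_zero.mp h2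
  intro y hy
  rcases eq_or_lt_of_le hy.1 with h1 | h1
  · rw [← h1]; exact hva
  rcases eq_or_lt_of_le hy.2 with h2 | h2
  · rw [h2]; exact hvb
  exact hvzero y ⟨h1, h2⟩
end
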